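/- arXiv:1610.00149 — 3 statements merged into one kernel-verified Lean document; each statement's English description precedes it below -/
import Mathlib

section
/- Let 0 ≤ g < 1, let G be a geometric random variable with P(G = r) = (1-g)·g^r for r ≥ 0, let n ≥ 0 be an integer, and let σ, t_suc, t_bit be real numbers and b : ℕ → ℝ a function. Then E[ σ·∑_{r=0}^{min(G,n)} b(r) + t_suc·1{G ≤ n} + t_bit·min(G, n+1) ] = σ·∑_{r=0}^{n} b(r)·g^r + t_suc·(1 - g^{n+1}) + t_bit·g·(1 - g^{n+1})/(1 - g). -/
/-! Every term of the cycle time is a linear combination of tail indicators `1{G ≥ j}`: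
`∑_{j ≤ min(G,n)} b j = ∑_{j ≤ n} b j·1{G ≥ j}`, `1{G ≤ n} = 1 - 1{G ≥ n+1}` and
`min(G, n+1) = ∑_{j ≤ n} 1{G ≥ j+1}`. Since `P(G ≥ j) = g^j`, linearity of the expectation gives
the formula, the last term through a finite geometric sum. -/

open Finset

section GeometricLaw

variable {g : ℝ}

theorem hasSum_geometric_pmf_mul_ite_le (hg0 : 0 ≤ g) (hg1 : g < 1) (j : ℕ) (c : ℝ) :
    HasSum (fun r : ℕ => (1 - g) * g ^ r * if j ≤ r then c else 0) (c * g ^ j) := by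
  have hg : 1 - g ≠ 0 := sub_ne_zero.mpr hg1.ne'
  rw [← hasSum_nat_add_iff' j]
  have hhead : ∑ r ∈ range j, ((1 - g) * g ^ r * if j ≤ r then c else 0) = 0 :=
    sum_eq_zero fun r hr => by simp [(mem_range.mp hr).not_ge]
  have hshift : (fun r => (1 - g) * g ^ (r + j) * if j ≤ r + j then c else 0)
      = fun r => c * (1 - g) * g ^ j * g ^ r := by
    funext r
    simp only [le_add_iff_nonneg_left, zero_le, if_true, pow_add]
    ring
  rw [hhead, sub_zero, hshift]
  have h := (hasSum_geometric_of_lt_one hg0 hg1).mul_left (c * (1 - g) * g ^ j)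
  rwa [show c * (1 - g) * g ^ j * (1 - g)⁻¹ = c * g ^ j by field_simp] at h

theorem hasSum_geometric_pmf_mul_sum_ite_le (hg0 : 0 ≤ g) (hg1 : g < 1) {ι : Type*}
    (s : Finset ι) (c : ι → ℝ) (k : ι → ℕ) :
    HasSum (fun r : ℕ => (1 - g) * g ^ r * ∑ i ∈ s, if k i ≤ r then c i else 0)
      (∑ i ∈ s, c i * g ^ k i) := by
  simp only [mul_sum]
  exact hasSum_sum fun i _ => hasSum_geometric_pmf_mul_ite_le hg0 hg1 (k i) (c i)

end GeometricLaw

theorem Finset.sum_range_min_succ_eq_sum_ite_le {M : Type*} [AddCommMonoid M] (f : ℕ → M)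
    (r n : ℕ) :
    ∑ j ∈ range (min r n + 1), f j = ∑ j ∈ range (n + 1), if j ≤ r then f j else 0 := by
  rw [← sum_filter]
  congr 1
  ext j
  simp only [mem_range, Order.lt_add_one_iff, le_inf_iff, mem_filter]
  omega

theorem Nat.cast_min_succ_eq_sum_ite {R : Type*} [AddCommMonoidWithOne R] (r n : ℕ) :
    ((min r (n + 1) : ℕ) : R) = ∑ j ∈ range (n + 1), if j + 1 ≤ r then 1 else 0 := by
  rw [sum_boole]
  congr 1
  rw [← card_range (min r (n + 1))]
  congr 1
  ext j
  simp only [mem_range, lt_inf_iff, Order.lt_add_one_iff, Order.add_one_le_iff, mem_filter]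
  omega

/-- Expected total time a sender spends on one packet in IEEE 802.11 DCF with
no collisions: `G` geometric with `P(G = r) = (1-g)·g^r` (`0 ≤ g < 1`), retry
limit `n`, backoff slot `σ`, mean backoff counters `b r`, success duration
`t_suc`, bit-error duration `t_bit`.  Then
`E[σ·∑_{r=0}^{min(G,n)} b r + t_suc·1{G ≤ n} + t_bit·min(G, n+1)]
  = σ·∑_{r=0}^{n} b r·g^r + t_suc·(1 - g^(n+1)) + t_bit·g·(1 - g^(n+1))/(1 - g)`. -/
theorem expected_cycle_time (g : ℝ) (hg0 : 0 ≤ g) (hg1 : g < 1) (n : ℕ)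
    (σ t_suc t_bit : ℝ) (b : ℕ → ℝ) :
    ∑' r : ℕ, ((1 - g) * g ^ r) *
        (σ * (∑ j ∈ Finset.range (min r n + 1), b j)
          + t_suc * (if r ≤ n then (1 : ℝ) else 0)
          + t_bit * ((min r (n + 1) : ℕ) : ℝ))
      = σ * (∑ r ∈ Finset.range (n + 1), b r * g ^ r)
        + t_suc * (1 - g ^ (n + 1))
        + t_bit * g * (1 - g ^ (n + 1)) / (1 - g) := by
  have hbackoff := hasSum_geometric_pmf_mul_sum_ite_le hg0 hg1 (range (n + 1)) b id
  have hsuccess := (hasSum_geometric_pmf_mul_ite_le hg0 hg1 0 1).sub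
    (hasSum_geometric_pmf_mul_ite_le hg0 hg1 (n + 1) 1)
  have hfailures := hasSum_geometric_pmf_mul_sum_ite_le hg0 hg1 (range (n + 1)) 1 (· + 1)
  have hindicator (r : ℕ) : (if r ≤ n then (1 : ℝ) else 0)
      = (if 0 ≤ r then 1 else 0) - if n + 1 ≤ r then 1 else 0 := by
    split_ifs <;> first | omega | norm_num
  have hgeom : ∑ i ∈ range (n + 1), g ^ (i + 1) = g * (1 - g ^ (n + 1)) / (1 - g) := by
    rw [eq_div_iff (sub_ne_zero.mpr hg1.ne'), ← geom_sum_mul_neg]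
    simp only [pow_succ', ← mul_sum]
    ring
  convert (((hbackoff.mul_left σ).add (hsuccess.mul_left t_suc)).add
    (hfailures.mul_left t_bit)).tsum_eq using 1
  · congr 1 with r
    rw [sum_range_min_succ_eq_sum_ite_le, Nat.cast_min_succ_eq_sum_ite, hindicator]
    simp only [id, Pi.one_apply]
    ring
  · simp only [id, Pi.one_apply, one_mul, pow_zero, hgeom]
    ring
end

section
/- Let F : ℝ → ℝ be a nondecreasing function with F(y) = 0 for y ≤ 0 and F(y) → 1 as y → ∞, let ℓ_d > 0 and ℓ_h ≥ 0, and for ℓ_h ≤ x ≤ ℓ_d + ℓ_h define F^(E)(x) = ∑_{s=0}^{∞} (F(x + s·ℓ_d − ℓ_h) − F(s·ℓ_d)). Then for all ℓ_h ≤ x ≤ x' ≤ ℓ_d + ℓ_h, the defining series converge and 0 ≤ F^(E)(x) ≤ F^(E)(x') ≤ 1. -/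
open Filter

/-!
Write `u = x - ℓ_h ∈ [0, ℓ_d]`. The `s`-th term `F(u + s ℓ_d) - F(s ℓ_d)` is nonnegative and
nondecreasing in `u` because `F` is monotone, and it is at most `F((s+1) ℓ_d) - F(s ℓ_d)`.
The partial sums are therefore dominated by the telescoping sum `F(n ℓ_d) - F(0) ≤ 1`, which
gives convergence and the upper bound.
-/

section EdgeTerm

variable {F : ℝ → ℝ} {d h x x' : ℝ}

theorem edge_term_nonneg (hF : Monotone F) (hx : h ≤ x) (s : ℕ) :
    0 ≤ F (x + (s : ℝ) * d - h) - F ((s : ℝ) * d) :=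
  sub_nonneg.2 (hF (by linarith))

theorem edge_term_mono (hF : Monotone F) (hxx' : x ≤ x') (s : ℕ) :
    F (x + (s : ℝ) * d - h) - F ((s : ℝ) * d) ≤ F (x' + (s : ℝ) * d - h) - F ((s : ℝ) * d) :=
  sub_le_sub_right (hF (by linarith)) _

theorem sum_range_edge_term_le (hF : Monotone F) (hx : x ≤ d + h) (n : ℕ) :
    ∑ s ∈ Finset.range n, (F (x + (s : ℝ) * d - h) - F ((s : ℝ) * d)) ≤ F (n * d) - F 0 :=
  calc ∑ s ∈ Finset.range n, (F (x + (s : ℝ) * d - h) - F ((s : ℝ) * d))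
      ≤ ∑ s ∈ Finset.range n, (F (((s + 1 : ℕ) : ℝ) * d) - F ((s : ℝ) * d)) :=
        Finset.sum_le_sum fun s _ => sub_le_sub_right (hF (by push_cast; linarith)) _
    _ = F (n * d) - F 0 := by
        rw [Finset.sum_range_sub (fun s : ℕ => F ((s : ℝ) * d))]
        simp

theorem sum_range_edge_term_le_one (hF : Monotone F) (hF0 : F 0 = 0)
    (hF1 : ∀ y, F y ≤ 1) (hx : x ≤ d + h) (n : ℕ) :
    ∑ s ∈ Finset.range n, (F (x + (s : ℝ) * d - h) - F ((s : ℝ) * d)) ≤ 1 := by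
  linarith [sum_range_edge_term_le hF hx n, hF1 (n * d)]

theorem summable_edge_term (hF : Monotone F) (hF0 : F 0 = 0) (hF1 : ∀ y, F y ≤ 1)
    (hhx : h ≤ x) (hx : x ≤ d + h) :
    Summable fun s : ℕ => F (x + (s : ℝ) * d - h) - F ((s : ℝ) * d) :=
  summable_of_sum_range_le (edge_term_nonneg hF hhx) (sum_range_edge_term_le_one hF hF0 hF1 hx)

end EdgeTerm

theorem edge_packet_distribution_wellDefined_general (F : ℝ → ℝ) (hmono : Monotone F)
    (h0 : ∀ y ≤ (0 : ℝ), F y = 0) (h1 : Tendsto F atTop (nhds 1))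
    (ℓd ℓh : ℝ)
    (x x' : ℝ) (hx : ℓh ≤ x) (hxx' : x ≤ x') (hx' : x' ≤ ℓd + ℓh) :
    Summable (fun s : ℕ => F (x + (s : ℝ) * ℓd - ℓh) - F ((s : ℝ) * ℓd)) ∧
    Summable (fun s : ℕ => F (x' + (s : ℝ) * ℓd - ℓh) - F ((s : ℝ) * ℓd)) ∧
    0 ≤ ∑' s : ℕ, (F (x + (s : ℝ) * ℓd - ℓh) - F ((s : ℝ) * ℓd)) ∧
    (∑' s : ℕ, (F (x + (s : ℝ) * ℓd - ℓh) - F ((s : ℝ) * ℓd)))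
      ≤ ∑' s : ℕ, (F (x' + (s : ℝ) * ℓd - ℓh) - F ((s : ℝ) * ℓd)) ∧
    (∑' s : ℕ, (F (x' + (s : ℝ) * ℓd - ℓh) - F ((s : ℝ) * ℓd))) ≤ 1 := by
  have hF0 : F 0 = 0 := h0 0 le_rfl
  have hF1 : ∀ y, F y ≤ 1 := hmono.ge_of_tendsto h1
  have hS := summable_edge_term hmono hF0 hF1 hx (hxx'.trans hx')
  have hS' := summable_edge_term hmono hF0 hF1 (hx.trans hxx') hx'
  exact ⟨hS, hS', tsum_nonneg (edge_term_nonneg hmono hx),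
    hS.tsum_le_tsum (edge_term_mono hmono hxx') hS',
    hS'.tsum_le_of_sum_range_le (sum_range_edge_term_le_one hmono hF0 hF1 hx')⟩

/-- The edge-packet size distribution
`F^(E)(x) = ∑_{s=0}^∞ (F(x + s·ℓ_d − ℓ_h) − F(s·ℓ_d))` is well defined
(the series converges), takes values in `[0,1]`, and is nondecreasing on
`[ℓ_h, ℓ_d + ℓ_h]`, where `F` is a nondecreasing message-size distribution
function vanishing on `(-∞,0]` and tending to `1` at `+∞`. -/
theorem edge_packet_distribution_wellDefined (F : ℝ → ℝ) (hmono : Monotone F)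
    (h0 : ∀ y ≤ (0 : ℝ), F y = 0) (h1 : Tendsto F atTop (nhds 1))
    (ℓd ℓh : ℝ) (hd : 0 < ℓd) (hh : 0 ≤ ℓh)
    (x x' : ℝ) (hx : ℓh ≤ x) (hxx' : x ≤ x') (hx' : x' ≤ ℓd + ℓh) :
    Summable (fun s : ℕ => F (x + (s : ℝ) * ℓd - ℓh) - F ((s : ℝ) * ℓd)) ∧
    Summable (fun s : ℕ => F (x' + (s : ℝ) * ℓd - ℓh) - F ((s : ℝ) * ℓd)) ∧
    0 ≤ ∑' s : ℕ, (F (x + (s : ℝ) * ℓd - ℓh) - F ((s : ℝ) * ℓd)) ∧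
    (∑' s : ℕ, (F (x + (s : ℝ) * ℓd - ℓh) - F ((s : ℝ) * ℓd)))
      ≤ ∑' s : ℕ, (F (x' + (s : ℝ) * ℓd - ℓh) - F ((s : ℝ) * ℓd)) ∧
    (∑' s : ℕ, (F (x' + (s : ℝ) * ℓd - ℓh) - F ((s : ℝ) * ℓd))) ≤ 1 :=
  edge_packet_distribution_wellDefined_general F hmono h0 h1 ℓd ℓh x x' hx hxx' hx'
end

section
/- Let n ≥ 1, let w_1, …, w_n > 0, let ℓ_1, …, ℓ_n > 0, let c ≥ 0, and set ℓ_max = max_i ℓ_i. For 0 < p < 1 define H(p) = ∑_{i=1}^{n} w_i ℓ_i (1−p)^{−(ℓ_i + c)} / ∑_{j=1}^{n} w_j (1−p)^{−(ℓ_j + c)}. Then H(p) → ℓ_max as p → 1⁻. -/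
/-!
Substitute `t = 1 - p → 0⁺` and divide numerator and denominator by `t ^ (-(ℓmax + c))`.
The exponents become `ℓmax - ℓᵢ ≥ 0`, so both sums extend continuously to `t = 0`, where
only the terms with `ℓᵢ = ℓmax` survive; their ratio is `ℓmax`.
-/

open Filter Topology

section

variable {ι : Type*} [Fintype ι]

lemma sum_mul_rpow_neg_add_eq (f ℓ : ι → ℝ) (c m : ℝ) {t : ℝ} (ht : 0 < t) :
    ∑ i, f i * t ^ (-(ℓ i + c)) = (∑ i, f i * t ^ (m - ℓ i)) * t ^ (-(m + c)) := by
  rw [Finset.sum_mul]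
  refine Finset.sum_congr rfl fun i _ => ?_
  rw [mul_assoc, ← Real.rpow_add ht]
  ring_nf

lemma weighted_rpow_ratio_eq (w ℓ : ι → ℝ) (c m : ℝ) {t : ℝ} (ht : 0 < t) :
    (∑ i, w i * ℓ i * t ^ (-(ℓ i + c))) / (∑ j, w j * t ^ (-(ℓ j + c)))
      = (∑ i, w i * ℓ i * t ^ (m - ℓ i)) / (∑ j, w j * t ^ (m - ℓ j)) := by
  rw [sum_mul_rpow_neg_add_eq _ ℓ c m ht, sum_mul_rpow_neg_add_eq _ ℓ c m ht,
    mul_div_mul_right _ _ (Real.rpow_pos_of_pos ht _).ne']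

lemma continuousAt_sum_mul_rpow_sub (f ℓ : ι → ℝ) {m : ℝ} (hle : ∀ i, ℓ i ≤ m) (x : ℝ) :
    ContinuousAt (fun t : ℝ => ∑ i, f i * t ^ (m - ℓ i)) x :=
  tendsto_finsetSum _ fun i _ =>
    continuousAt_const.mul (Real.continuousAt_rpow_const x _ (Or.inr (sub_nonneg.2 (hle i))))

lemma zero_rpow_sub_mul_self (x m : ℝ) : (0 : ℝ) ^ (m - x) * x = (0 : ℝ) ^ (m - x) * m := by
  by_cases h : m - x = 0
  · rw [sub_eq_zero.1 h]
  · rw [Real.zero_rpow h, zero_mul, zero_mul]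

lemma sum_mul_zero_rpow_pos {w ℓ : ι → ℝ} (hw : ∀ i, 0 < w i) {m : ℝ}
    (hm : m ∈ Set.range ℓ) : 0 < ∑ j, w j * (0 : ℝ) ^ (m - ℓ j) := by
  obtain ⟨i₀, rfl⟩ := hm
  refine Finset.sum_pos' (fun j _ => mul_nonneg (hw j).le (Real.rpow_nonneg le_rfl _))
    ⟨i₀, Finset.mem_univ _, ?_⟩
  simpa using hw i₀

theorem tendsto_weighted_rpow_ratio_nhdsGT_zero {w ℓ : ι → ℝ} (hw : ∀ i, 0 < w i) (c : ℝ)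
    {m : ℝ} (hmax : IsGreatest (Set.range ℓ) m) :
    Tendsto (fun t : ℝ =>
        (∑ i, w i * ℓ i * t ^ (-(ℓ i + c))) / (∑ j, w j * t ^ (-(ℓ j + c))))
      (𝓝[>] 0) (𝓝 m) := by
  have hle : ∀ i, ℓ i ≤ m := fun i => hmax.2 ⟨i, rfl⟩
  have hden := sum_mul_zero_rpow_pos hw hmax.1
  have hcont : Tendsto (fun t : ℝ =>
      (∑ i, w i * ℓ i * t ^ (m - ℓ i)) / (∑ j, w j * t ^ (m - ℓ j))) (𝓝 0)
      (𝓝 ((∑ i, w i * ℓ i * (0 : ℝ) ^ (m - ℓ i)) / (∑ j, w j * (0 : ℝ) ^ (m - ℓ j)))) :=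
    ((continuousAt_sum_mul_rpow_sub (fun i => w i * ℓ i) ℓ hle 0).div
      (continuousAt_sum_mul_rpow_sub w ℓ hle 0) hden.ne').tendsto
  have hlim : (∑ i, w i * ℓ i * (0 : ℝ) ^ (m - ℓ i)) / (∑ j, w j * (0 : ℝ) ^ (m - ℓ j)) = m := by
    rw [div_eq_iff hden.ne', Finset.mul_sum]
    exact Finset.sum_congr rfl fun i _ => by
      linear_combination w i * zero_rpow_sub_mul_self (ℓ i) m
  rw [hlim] at hcont
  refine (hcont.mono_left nhdsWithin_le_nhds).congr' ?_
  filter_upwards [self_mem_nhdsWithin] with t ht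
  exact (weighted_rpow_ratio_eq w ℓ c m ht).symm

end

lemma tendsto_one_sub_nhdsWithin_Ioo_one :
    Tendsto (fun p : ℝ => 1 - p) (𝓝[Set.Ioo 0 1] 1) (𝓝[>] 0) := by
  refine tendsto_nhdsWithin_of_tendsto_nhds_of_eventually_within _ ?_ ?_
  · simpa using ((continuous_sub_left (1 : ℝ)).tendsto 1).mono_left nhdsWithin_le_nhds
  · filter_upwards [self_mem_nhdsWithin] with p hp
    exact sub_pos.2 hp.2

theorem mean_transferred_size_tendsto_max_general (n : ℕ)
    (w ℓ : Fin n → ℝ) (hw : ∀ i, 0 < w i)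
    (c : ℝ) (ℓmax : ℝ) (hmax : IsGreatest (Set.range ℓ) ℓmax) :
    Tendsto (fun p : ℝ =>
        (∑ i, w i * ℓ i * (1 - p) ^ (-(ℓ i + c)))
          / (∑ j, w j * (1 - p) ^ (-(ℓ j + c))))
      (nhdsWithin 1 (Set.Ioo (0 : ℝ) 1)) (nhds ℓmax) :=
  (tendsto_weighted_rpow_ratio_nhdsGT_zero hw c hmax).comp tendsto_one_sub_nhdsWithin_Ioo_one

/-- Conjecture 1 for discrete generated-packet size distributions: with
infinite retry limit and bit error rate `p`, the mean transferred packet size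
`H(p) = ∑ᵢ wᵢ ℓᵢ (1−p)^{−(ℓᵢ+c)} / ∑ⱼ wⱼ (1−p)^{−(ℓⱼ+c)}` tends to the maximum
generated packet size `ℓ_max` as `p → 1⁻`. -/
theorem mean_transferred_size_tendsto_max (n : ℕ) (hn : 1 ≤ n)
    (w ℓ : Fin n → ℝ) (hw : ∀ i, 0 < w i) (hℓ : ∀ i, 0 < ℓ i)
    (c : ℝ) (hc : 0 ≤ c) (ℓmax : ℝ) (hmax : IsGreatest (Set.range ℓ) ℓmax) :
    Tendsto (fun p : ℝ =>
        (∑ i, w i * ℓ i * (1 - p) ^ (-(ℓ i + c)))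
          / (∑ j, w j * (1 - p) ^ (-(ℓ j + c))))
      (nhdsWithin 1 (Set.Ioo (0 : ℝ) 1)) (nhds ℓmax) :=
  mean_transferred_size_tendsto_max_general n w ℓ hw c ℓmax hmax
end
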